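/- Let C(z) be the formal power series satisfying C(z) = 1 + 2z C(z) + z² C(z)² (i.e., z C(z) is the compositional inverse of z/(1+z)²). Then for all n ≥ 1 and non-negative integers t, the coefficient of z^n in (zC(z))^{t+2}/(1+zC(z))² equals C(2n-3, n-t-2) - C(2n-3, n-t-3). -/

import Mathlib

/-! Completing the square gives `C = (1 + zC)²`, so `D = 1 + zC` satisfies the Catalan equation
`D = 1 + zD²` and the series in question is `z^{t+2} D^{2t+2}`. The coefficient of `z^m` in `D^j`
is the ballot number `C(2m+j-1, m) - C(2m+j-1, m-1)`: both sides obey the recursion coming from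
`D^{j+1} = D^j + z D^{j+2}`, the right-hand one by Pascal's rule. -/

/-- Binomial coefficient `C(a,b)` for integers `a`, `b`, with the convention that it
vanishes when `b < 0` or `b > a`. -/
def zchoose (a b : ℤ) : ℤ :=
  if 0 ≤ b ∧ b ≤ a then (a.toNat).choose b.toNat else 0

lemma zchoose_of_neg {a b : ℤ} (hb : b < 0) : zchoose a b = 0 :=
  if_neg fun h => hb.not_ge h.1

lemma zchoose_natCast (a b : ℕ) : zchoose a b = a.choose b := by
  unfold zchoose
  split_ifs with h
  · simp
  · rw [Nat.choose_eq_zero_of_lt (by omega), Nat.cast_zero]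

lemma zchoose_succ_succ {a : ℤ} (ha : 0 ≤ a) (b : ℤ) :
    zchoose (a + 1) (b + 1) = zchoose a b + zchoose a (b + 1) := by
  lift a to ℕ using ha
  obtain hb | rfl | hb : b < -1 ∨ b = -1 ∨ 0 ≤ b := by omega
  · simp only [zchoose_of_neg (by omega : b + 1 < 0), zchoose_of_neg (by omega : b < 0), add_zero]
  · have h₁ := zchoose_natCast (a + 1) 0
    have h₂ := zchoose_natCast a 0
    push_cast at h₁ h₂
    simp [zchoose_of_neg, h₁, h₂]
  · lift b to ℕ using hb
    have h₁ := zchoose_natCast (a + 1) (b + 1)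
    have h₂ := zchoose_natCast a (b + 1)
    push_cast at h₁ h₂
    rw [h₁, h₂, zchoose_natCast]
    exact_mod_cast Nat.choose_succ_succ' a b

def ballot (j m : ℕ) : ℤ :=
  zchoose (2 * m + j - 1) m - zchoose (2 * m + j - 1) (m - 1)

lemma ballot_succ_zero (j : ℕ) : ballot (j + 1) 0 = 1 := by
  have h := zchoose_natCast j 0
  simp_all [ballot, zchoose_of_neg]

lemma ballot_zero_succ (m : ℕ) : ballot 0 (m + 1) = 0 := by
  have h₁ := zchoose_natCast (2 * m + 1) (m + 1)
  have h₂ := zchoose_natCast (2 * m + 1) m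
  push_cast at h₁ h₂
  rw [ballot, sub_eq_zero, Nat.cast_succ, add_sub_cancel_right]
  convert h₁.trans ((congrArg _ (Nat.choose_symm_half m)).trans h₂.symm) using 2 <;> ring

lemma ballot_succ_succ (j m : ℕ) :
    ballot (j + 1) (m + 1) = ballot j (m + 1) + ballot (j + 2) m := by
  have ha : (0 : ℤ) ≤ 2 * m + j + 1 := by positivity
  have h₁ := zchoose_succ_succ ha m
  have h₂ := zchoose_succ_succ ha (m - 1)
  simp only [ballot]
  push_cast
  ring_nf at h₁ h₂ ⊢
  linear_combination h₁ - h₂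

namespace PowerSeries

variable {R : Type*} [CommRing R] {D : R⟦X⟧}

lemma constantCoeff_eq_one_of_eq_one_add_X_mul_sq (hD : D = 1 + X * D ^ 2) :
    constantCoeff D = 1 := by
  simpa using congrArg constantCoeff hD

theorem coeff_pow_of_eq_one_add_X_mul_sq (hD : D = 1 + X * D ^ 2) {m j : ℕ}
    (hmj : m ≠ 0 ∨ j ≠ 0) : coeff m (D ^ j) = ballot j m := by
  induction m generalizing j with
  | zero =>
    obtain ⟨j, rfl⟩ := Nat.exists_eq_succ_of_ne_zero (hmj.resolve_left (by simp))
    simp [coeff_zero_eq_constantCoeff_apply, constantCoeff_eq_one_of_eq_one_add_X_mul_sq hD,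
      ballot_succ_zero]
  | succ m ihm =>
    clear hmj
    induction j with
    | zero => simp [ballot_zero_succ, coeff_one]
    | succ j ihj =>
      have hpow : D ^ (j + 1) = D ^ j + X * D ^ (j + 2) := by linear_combination D ^ j * hD
      rw [hpow, map_add, ihj, coeff_succ_X_mul, ihm (by simp), ballot_succ_succ, Int.cast_add]

end PowerSeries

open PowerSeries in
theorem coeff_motzkin_term1_general (C : PowerSeries ℚ)
    (hC : C = 1 + 2 * X * C + X ^ 2 * C ^ 2) (n t : ℕ) :
    PowerSeries.coeff n ((X * C) ^ (t + 2) * ((1 + X * C) ^ 2)⁻¹) =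
      ((zchoose (2 * (n : ℤ) - 3) ((n : ℤ) - t - 2)
        - zchoose (2 * (n : ℤ) - 3) ((n : ℤ) - t - 3) : ℤ) : ℚ) := by
  set D := 1 + X * C
  have hDsq : D ^ 2 = C := by linear_combination -hC
  have hD : D = 1 + X * D ^ 2 := by rw [hDsq]
  have hC₀ : constantCoeff C ≠ 0 := by
    rw [← hDsq, map_pow, constantCoeff_eq_one_of_eq_one_add_X_mul_sq hD, one_pow]
    exact one_ne_zero
  have hseries : (X * C) ^ (t + 2) * (D ^ 2)⁻¹ = X ^ (t + 2) * D ^ (2 * t + 2) :=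
    calc (X * C) ^ (t + 2) * (D ^ 2)⁻¹ = X ^ (t + 2) * C ^ (t + 1) * (C * C⁻¹) := by
          rw [hDsq]; ring
      _ = X ^ (t + 2) * D ^ (2 * t + 2) := by
          rw [PowerSeries.mul_inv_cancel C hC₀, mul_one, ← hDsq, ← pow_mul]; rfl
  rw [hseries, coeff_X_pow_mul']
  split_ifs with h
  · obtain ⟨m, rfl⟩ := Nat.exists_eq_add_of_le' h
    rw [Nat.add_sub_cancel, coeff_pow_of_eq_one_add_X_mul_sq hD (Or.inr (by omega)), ballot]
    push_cast
    ring_nf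
  · rw [zchoose_of_neg (by omega), zchoose_of_neg (by omega), sub_zero, Int.cast_zero]

open PowerSeries in
/-- If `C(z)` is the formal power series with `C = 1 + 2zC + z²C²`, then for `n ≥ 1`
the coefficient of `z^n` in `(zC)^{t+2}/(1+zC)²` equals `C(2n-3,n-t-2) − C(2n-3,n-t-3)`. -/
theorem coeff_motzkin_term1 (C : PowerSeries ℚ)
    (hC : C = 1 + 2 * X * C + X ^ 2 * C ^ 2) (n t : ℕ) (hn : 1 ≤ n) :
    PowerSeries.coeff n ((X * C) ^ (t + 2) * ((1 + X * C) ^ 2)⁻¹) =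
      ((zchoose (2 * (n : ℤ) - 3) ((n : ℤ) - t - 2)
        - zchoose (2 * (n : ℤ) - 3) ((n : ℤ) - t - 3) : ℤ) : ℚ) :=
  coeff_motzkin_term1_general C hC n t
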